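/- arXiv:2101.01319 — 3 statements merged into one kernel-verified Lean document; each statement's English description precedes it below -/
import Mathlib

section
/- Let (A, ∗, α) be a Hom-associative algebra over a field K, i.e., α(x)∗(y∗z) = (x∗y)∗α(z) for all x,y,z ∈ A, with α linear and multiplicative (α(x∗y) = α(x)∗α(y)). Define [x,y] = x∗y − y∗x. Then (A, [·,·], α) is a Hom-Lie algebra: the bracket is bilinear, skew-symmetric, and satisfies the Hom-Jacobi identity [α(x),[y,z]] + [α(y),[z,x]] + [α(z),[x,y]] = 0. -/
/-! The Hom-Jacobi expression of the commutator bracket is the alternating sum, over the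
permutations of `(x, y, z)`, of the Hom-associators `(x * y) * α z - α x * (y * z)`;
Hom-associativity makes every one of them vanish. -/

namespace HomAlgebra

variable {R A : Type*} [CommSemiring R] [AddCommGroup A] [Module R A]
  (mul : A →ₗ[R] A →ₗ[R] A) (α : A → A)

def commutator (x y : A) : A := mul x y - mul y x

def homAssociator (x y z : A) : A := mul (mul x y) (α z) - mul (α x) (mul y z)

theorem commutator_skew (x y : A) : commutator mul x y = -commutator mul y x := by
  simp only [commutator, neg_sub]

theorem homJacobi_commutator_eq_sum_homAssociator (x y z : A) :
    commutator mul (α x) (commutator mul y z) + commutator mul (α y) (commutator mul z x)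
        + commutator mul (α z) (commutator mul x y) =
      homAssociator mul α x z y + homAssociator mul α y x z + homAssociator mul α z y x
        - (homAssociator mul α x y z + homAssociator mul α y z x + homAssociator mul α z x y) := by
  simp only [commutator, homAssociator, map_sub, LinearMap.sub_apply]
  abel

theorem homJacobi_commutator
    (homassoc : ∀ x y z : A, mul (α x) (mul y z) = mul (mul x y) (α z)) (x y z : A) :
    commutator mul (α x) (commutator mul y z) + commutator mul (α y) (commutator mul z x)
      + commutator mul (α z) (commutator mul x y) = 0 := by
  have hassoc (x y z : A) : homAssociator mul α x y z = 0 := by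
    rw [homAssociator, homassoc, sub_self]
  simp only [homJacobi_commutator_eq_sum_homAssociator, hassoc, add_zero, sub_self]

end HomAlgebra

theorem homAssociative_gives_homLie_general
    {K : Type*} [Field K] {A : Type*} [AddCommGroup A] [Module K A]
    (mul : A →ₗ[K] A →ₗ[K] A) (α : A →ₗ[K] A)
    (homassoc : ∀ x y z : A, mul (α x) (mul y z) = mul (mul x y) (α z))
    (bracket : A → A → A)
    (hb : ∀ x y : A, bracket x y = mul x y - mul y x) :
    (∀ x y : A, bracket x y = - bracket y x) ∧
    (∀ x y z : A,
      bracket (α x) (bracket y z) + bracket (α y) (bracket z x)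
        + bracket (α z) (bracket x y) = 0) := by
  obtain rfl : bracket = HomAlgebra.commutator mul := funext fun x => funext (hb x)
  exact ⟨HomAlgebra.commutator_skew mul, HomAlgebra.homJacobi_commutator mul α homassoc⟩

/-- A multiplicative Hom-associative algebra yields a Hom-Lie algebra via the
commutator bracket: skew-symmetry and the Hom-Jacobi identity hold
(bilinearity is automatic since the bracket is built from the bilinear `mul`). -/
theorem homAssociative_gives_homLie
    {K : Type*} [Field K] {A : Type*} [AddCommGroup A] [Module K A]
    (mul : A →ₗ[K] A →ₗ[K] A) (α : A →ₗ[K] A)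
    (homassoc : ∀ x y z : A, mul (α x) (mul y z) = mul (mul x y) (α z))
    (mult : ∀ x y : A, α (mul x y) = mul (α x) (α y))
    (bracket : A → A → A)
    (hb : ∀ x y : A, bracket x y = mul x y - mul y x) :
    (∀ x y : A, bracket x y = - bracket y x) ∧
    (∀ x y z : A,
      bracket (α x) (bracket y z) + bracket (α y) (bracket z x)
        + bracket (α z) (bracket x y) = 0) :=
  homAssociative_gives_homLie_general mul α homassoc bracket hb
end

section
/- Let (l, α_l) and (m, α_m) be multiplicative Hom-Lie algebras with a Hom-action of l on m, i.e., a bilinear map (x, n) ↦ x ▹ n satisfying (a) [x,y] ▹ α_m(n) = α_l(x) ▹ (y ▹ n) − α_l(y) ▹ (x ▹ n), (b) α_l(x) ▹ [n,n'] = [x ▹ n, α_m(n')] + [α_m(n), x ▹ n'], and (c) α_m(x ▹ n) = α_l(x) ▹ α_m(n). Then the semidirect product m ⋊ l, with underlying space m ⊕ l, bracket [(m₁,x₁),(m₂,x₂)] = ([m₁,m₂] + x₁ ▹ m₂ − x₂ ▹ m₁, [x₁,x₂]), and twisting map α̃(n,x) = (α_m(n), α_l(x)), is a Hom-Lie algebra: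 the bracket is skew-symmetric and satisfies the Hom-Jacobi identity with respect to α̃. -/
/-!
The `l`-component of both identities is the corresponding identity of `l`. In the `m`-component
of the Hom-Jacobi sum, the terms with no `l`-entry cancel by the Hom-Jacobi identity of `m`; by
condition (b) and skew-symmetry, `α_l(x)` acts on brackets as a twisted derivation, which kills the
terms with one `l`-entry; and the terms with two `l`-entries cancel in groups of three by
condition (a).
-/

section SemidirectProduct

variable {K l m : Type*} [CommRing K] [AddCommGroup l] [Module K l] [AddCommGroup m] [Module K m]
  (brl : l →ₗ[K] l →ₗ[K] l) (brm : m →ₗ[K] m →ₗ[K] m) (act : l →ₗ[K] m →ₗ[K] m)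
  {αl : l →ₗ[K] l} {αm : m →ₗ[K] m}

def semidirectBracket (p q : m × l) : m × l :=
  (brm p.1 q.1 + act p.2 q.1 - act q.2 p.1, brl p.2 q.2)

variable {brl brm act}

theorem semidirectBracket_anticomm (skewl : ∀ x y : l, brl x y = - brl y x)
    (skewm : ∀ a b : m, brm a b = - brm b a) (p q : m × l) :
    semidirectBracket brl brm act p q = - semidirectBracket brl brm act q p := by
  ext
  · simp only [semidirectBracket, Prod.fst_neg]
    linear_combination (norm := abel1) skewm p.1 q.1
  · exact skewl p.2 q.2

theorem act_brm_eq_sub (skewm : ∀ a b : m, brm a b = - brm b a)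
    (hb : ∀ (x : l) (a b : m), act (αl x) (brm a b) = brm (act x a) (αm b) + brm (αm a) (act x b))
    (x : l) (a b : m) :
    act (αl x) (brm a b) = brm (αm a) (act x b) - brm (αm b) (act x a) := by
  linear_combination (norm := abel1) hb x a b + skewm (act x a) (αm b)

theorem semidirectBracket_homJacobi
    (jacobil : ∀ x y z : l,
      brl (αl x) (brl y z) + brl (αl y) (brl z x) + brl (αl z) (brl x y) = 0)
    (skewm : ∀ a b : m, brm a b = - brm b a)
    (jacobim : ∀ a b c : m,
      brm (αm a) (brm b c) + brm (αm b) (brm c a) + brm (αm c) (brm a b) = 0)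
    (ha : ∀ (x y : l) (a : m),
      act (brl x y) (αm a) = act (αl x) (act y a) - act (αl y) (act x a))
    (hb : ∀ (x : l) (a b : m), act (αl x) (brm a b) = brm (act x a) (αm b) + brm (αm a) (act x b))
    (p q r : m × l) :
    let B := semidirectBracket brl brm act
    let α := Prod.map αm αl
    B (α p) (B q r) + B (α q) (B r p) + B (α r) (B p q) = 0 := by
  obtain ⟨a, x⟩ := p
  obtain ⟨b, y⟩ := q
  obtain ⟨c, z⟩ := r
  ext
  · simp only [semidirectBracket, Prod.map, Prod.fst_add, Prod.fst_zero, map_add, map_sub]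
    linear_combination (norm := abel1) jacobim a b c
      + act_brm_eq_sub skewm hb x b c + act_brm_eq_sub skewm hb y c a
      + act_brm_eq_sub skewm hb z a b
      - ha y z a - ha z x b - ha x y c
  · exact jacobil x y z

end SemidirectProduct

theorem semidirect_product_is_homLie_general
    {K : Type*} [Field K]
    {l : Type*} [AddCommGroup l] [Module K l]
    {m : Type*} [AddCommGroup m] [Module K m]
    (brl : l →ₗ[K] l →ₗ[K] l) (αl : l →ₗ[K] l)
    (brm : m →ₗ[K] m →ₗ[K] m) (αm : m →ₗ[K] m)
    (skewl : ∀ x y : l, brl x y = - brl y x)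
    (jacobil : ∀ x y z : l,
      brl (αl x) (brl y z) + brl (αl y) (brl z x) + brl (αl z) (brl x y) = 0)
    (skewm : ∀ x y : m, brm x y = - brm y x)
    (jacobim : ∀ x y z : m,
      brm (αm x) (brm y z) + brm (αm y) (brm z x) + brm (αm z) (brm x y) = 0)
    (act : l →ₗ[K] m →ₗ[K] m)
    (ha : ∀ (x y : l) (n : m),
      act (brl x y) (αm n) = act (αl x) (act y n) - act (αl y) (act x n))
    (hb : ∀ (x : l) (n n' : m),
      act (αl x) (brm n n') = brm (act x n) (αm n') + brm (αm n) (act x n'))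
    (B : m × l → m × l → m × l)
    (hB : ∀ p q : m × l,
      B p q = (brm p.1 q.1 + act p.2 q.1 - act q.2 p.1, brl p.2 q.2))
    (αt : m × l → m × l)
    (hαt : ∀ p : m × l, αt p = (αm p.1, αl p.2)) :
    (∀ p q : m × l, B p q = - B q p) ∧
    (∀ p q r : m × l,
      B (αt p) (B q r) + B (αt q) (B r p) + B (αt r) (B p q) = 0) := by
  obtain rfl : B = semidirectBracket brl brm act := funext₂ hB
  obtain rfl : αt = Prod.map αm αl := funext hαt
  exact ⟨semidirectBracket_anticomm skewl skewm,
    semidirectBracket_homJacobi jacobil skewm jacobim ha hb⟩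

/-- The semidirect product of multiplicative Hom-Lie algebras along a
Hom-action is a Hom-Lie algebra: skew-symmetric and Hom-Jacobi. -/
theorem semidirect_product_is_homLie
    {K : Type*} [Field K]
    {l : Type*} [AddCommGroup l] [Module K l]
    {m : Type*} [AddCommGroup m] [Module K m]
    (brl : l →ₗ[K] l →ₗ[K] l) (αl : l →ₗ[K] l)
    (brm : m →ₗ[K] m →ₗ[K] m) (αm : m →ₗ[K] m)
    (skewl : ∀ x y : l, brl x y = - brl y x)
    (jacobil : ∀ x y z : l,
      brl (αl x) (brl y z) + brl (αl y) (brl z x) + brl (αl z) (brl x y) = 0)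
    (multl : ∀ x y : l, αl (brl x y) = brl (αl x) (αl y))
    (skewm : ∀ x y : m, brm x y = - brm y x)
    (jacobim : ∀ x y z : m,
      brm (αm x) (brm y z) + brm (αm y) (brm z x) + brm (αm z) (brm x y) = 0)
    (multm : ∀ x y : m, αm (brm x y) = brm (αm x) (αm y))
    (act : l →ₗ[K] m →ₗ[K] m)
    (ha : ∀ (x y : l) (n : m),
      act (brl x y) (αm n) = act (αl x) (act y n) - act (αl y) (act x n))
    (hb : ∀ (x : l) (n n' : m),
      act (αl x) (brm n n') = brm (act x n) (αm n') + brm (αm n) (act x n'))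
    (hc : ∀ (x : l) (n : m), αm (act x n) = act (αl x) (αm n))
    (B : m × l → m × l → m × l)
    (hB : ∀ p q : m × l,
      B p q = (brm p.1 q.1 + act p.2 q.1 - act q.2 p.1, brl p.2 q.2))
    (αt : m × l → m × l)
    (hαt : ∀ p : m × l, αt p = (αm p.1, αl p.2)) :
    (∀ p q : m × l, B p q = - B q p) ∧
    (∀ p q r : m × l,
      B (αt p) (B q r) + B (αt q) (B r p) + B (αt r) (B p q) = 0) :=
  semidirect_product_is_homLie_general brl αl brm αm skewl jacobil skewm jacobim act ha hb B hB αt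
    hαt
end

section
/- Let (g, [·,·], β) be a multiplicative Hom-Lie algebra and d₁, d₂ two β^k-derivations of g for the same nonnegative integer k, i.e., dᵢ ∘ β^k = β^k ∘ dᵢ and dᵢ([u,v]) = [dᵢ(u), β^k(v)] + [β^k(u), dᵢ(v)]. Then the commutator [d₁, d₂] = d₁∘d₂ − d₂∘d₁ is a β^{2k}-derivation of g. -/
/-!
Expanding `d₁ d₂ [u, v]` by the twisted Leibniz rule and moving each `dᵢ` past `α` gives
`[d₁ d₂ u, α² v] + [α² u, d₁ d₂ v]` plus the cross terms `[α d₂ u, α d₁ v] + [α d₁ u, α d₂ v]`,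
which are symmetric in `d₁, d₂` and so cancel in the commutator.
-/

structure IsTwistedDerivation {R M : Type*} [CommRing R] [AddCommGroup M] [Module R M]
    (br : M →ₗ[R] M →ₗ[R] M) (α d : Module.End R M) : Prop where
  commute : Commute d α
  leibniz : ∀ u v : M, d (br u v) = br (d u) (α v) + br (α u) (d v)

namespace IsTwistedDerivation

variable {R M : Type*} [CommRing R] [AddCommGroup M] [Module R M]
  {br : M →ₗ[R] M →ₗ[R] M} {α d d₁ d₂ : Module.End R M}

theorem apply_comm (h : IsTwistedDerivation br α d) (u : M) : d (α u) = α (d u) :=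
  LinearMap.congr_fun h.commute u

theorem lie (h₁ : IsTwistedDerivation br α d₁) (h₂ : IsTwistedDerivation br α d₂) :
    IsTwistedDerivation br (α * α) ⁅d₁, d₂⁆ where
  commute := by
    have c₁ := h₁.commute.mul_right h₁.commute
    have c₂ := h₂.commute.mul_right h₂.commute
    rw [Ring.lie_def]
    exact (c₁.mul_left c₂).sub_left (c₂.mul_left c₁)
  leibniz u v := by
    simp only [Ring.lie_def, LinearMap.sub_apply, Module.End.mul_apply, h₁.leibniz, h₂.leibniz,
      map_add, map_sub, h₁.apply_comm, h₂.apply_comm]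
    abel

end IsTwistedDerivation

theorem commutator_of_derivations_general
    {K : Type*} [Field K] {g : Type*} [AddCommGroup g] [Module K g]
    (br : g →ₗ[K] g →ₗ[K] g) (β : g →ₗ[K] g)
    (k : ℕ) (d₁ d₂ : g →ₗ[K] g)
    (hc₁ : ∀ u : g, d₁ ((β ^ k) u) = (β ^ k) (d₁ u))
    (hc₂ : ∀ u : g, d₂ ((β ^ k) u) = (β ^ k) (d₂ u))
    (hd₁ : ∀ u v : g, d₁ (br u v) = br (d₁ u) ((β ^ k) v) + br ((β ^ k) u) (d₁ v))
    (hd₂ : ∀ u v : g, d₂ (br u v) = br (d₂ u) ((β ^ k) v) + br ((β ^ k) u) (d₂ v))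
    (D : g → g) (hD : ∀ u : g, D u = d₁ (d₂ u) - d₂ (d₁ u)) :
    (∀ u : g, D ((β ^ (2 * k)) u) = (β ^ (2 * k)) (D u)) ∧
    (∀ u v : g,
      D (br u v) = br (D u) ((β ^ (2 * k)) v) + br ((β ^ (2 * k)) u) (D v)) := by
  have h₁ : IsTwistedDerivation br (β ^ k) d₁ := ⟨LinearMap.ext hc₁, hd₁⟩
  have h₂ : IsTwistedDerivation br (β ^ k) d₂ := ⟨LinearMap.ext hc₂, hd₂⟩
  have hD' : D = ⁅d₁, d₂⁆ := funext fun u => by rw [hD, Ring.lie_def]; rfl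
  have hβ : β ^ (2 * k) = β ^ k * β ^ k := by rw [two_mul, pow_add]
  obtain ⟨hcomm, hleibniz⟩ := hβ ▸ h₁.lie h₂
  exact ⟨fun u => hD' ▸ LinearMap.congr_fun hcomm u, fun u v => hD' ▸ hleibniz u v⟩

/-- The commutator of two `β^k`-derivations of a multiplicative Hom-Lie
algebra is a `β^(2k)`-derivation. -/
theorem commutator_of_derivations
    {K : Type*} [Field K] {g : Type*} [AddCommGroup g] [Module K g]
    (br : g →ₗ[K] g →ₗ[K] g) (β : g →ₗ[K] g)
    (skew : ∀ u v : g, br u v = - br v u)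
    (jacobi : ∀ u v w : g,
      br (β u) (br v w) + br (β v) (br w u) + br (β w) (br u v) = 0)
    (mult : ∀ u v : g, β (br u v) = br (β u) (β v))
    (k : ℕ) (d₁ d₂ : g →ₗ[K] g)
    (hc₁ : ∀ u : g, d₁ ((β ^ k) u) = (β ^ k) (d₁ u))
    (hc₂ : ∀ u : g, d₂ ((β ^ k) u) = (β ^ k) (d₂ u))
    (hd₁ : ∀ u v : g, d₁ (br u v) = br (d₁ u) ((β ^ k) v) + br ((β ^ k) u) (d₁ v))
    (hd₂ : ∀ u v : g, d₂ (br u v) = br (d₂ u) ((β ^ k) v) + br ((β ^ k) u) (d₂ v))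
    (D : g → g) (hD : ∀ u : g, D u = d₁ (d₂ u) - d₂ (d₁ u)) :
    (∀ u : g, D ((β ^ (2 * k)) u) = (β ^ (2 * k)) (D u)) ∧
    (∀ u v : g,
      D (br u v) = br (D u) ((β ^ (2 * k)) v) + br ((β ^ (2 * k)) u) (D v)) :=
  commutator_of_derivations_general br β k d₁ d₂ hc₁ hc₂ hd₁ hd₂ D hD
end
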